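/- (Boosted GFlowNet training performs boosting variational inference.) Assume P_B(τ|t(τ)) > 0 for every τ ∈ Γ. Let R̂_old : X → ℝ with R̂_old(x) ≥ 0, set Z_old := ∑_{x∈X} R̂_old(x) and assume Z_old > 0; let Z_θ > 0 be a constant and β := Z_θ/(Z_old + Z_θ). Let E be a finite-dimensional real normed vector space and p_F : E → Γ → ℝ a parametrized forward family with p_F(θ,τ) > 0, ∑_{τ∈Γ} p_F(θ,τ) = 1 for every θ, and θ ↦ p_F(θ,τ) differentiable. Define p_old(τ) := R̂_old(t(τ))·P_B(τ|t(τ))/Z_old, p_tgt(τ) := R(t(τ))·P_B(τ|t(τ))/(Z_old + Z_θ), p_M(θ,τ) := (1−β)·p_old(τ) + β·p_F(θ,τ), and the boosted loss L_boost(θ,τ) := (log(Z_θ·p_F(θ,τ)/P_B(τ|t(τ)) + R̂_old(t(τ))) − log R(t(τ)))². Then for every θ ∈ E, ∑_{τ∈Γ} p_M(θ,τ)·∇_θ L_boost(θ,τ) = 2·∇_θ[∑_{τ∈Γ} p_M(θ,τ)·log(p_M(θ,τ)/p_tgt(τ))], where ∇_θ denotes the Fréchet derivative with respect to θ. -/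

import Mathlib

/-!
Write `g = Z_θ·p_F/P_B + R̂_old` for the quantity inside the boosted loss. Then
`p_M = g·P_B/(Z_old + Z_θ)`, so `p_M/p_tgt = g/R` and `L_boost = log(p_M/p_tgt)²`. For any differentiable
family `m` of positive weights with constant total mass and any fixed positive `r`,
`m·∇ log(m/r)² = 2·log(m/r)·∇m` and `∇(m·log(m/r)) = (log(m/r) + 1)·∇m`; summing over trajectories, the
`+1` terms add up to the derivative of the total mass, which vanishes.
-/

section Calculus

variable {E : Type*} [NormedAddCommGroup E] [NormedSpace ℝ E] {Γ : Type*} [Fintype Γ]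

theorem sum_eq_zero_of_hasFDerivAt_of_sum_eq_const {F : Type*} [NormedAddCommGroup F]
    [NormedSpace ℝ F] {f : E → Γ → F} {f' : Γ → E →L[ℝ] F} {θ : E} {c : F}
    (hf : ∀ τ, HasFDerivAt (fun θ' => f θ' τ) (f' τ) θ) (hc : ∀ θ', ∑ τ, f θ' τ = c) :
    ∑ τ, f' τ = 0 := by
  have hsum : HasFDerivAt (fun θ' => ∑ τ, f θ' τ) (∑ τ, f' τ) θ :=
    HasFDerivAt.fun_sum fun τ _ => hf τ
  simp only [hc] at hsum
  exact hsum.unique (hasFDerivAt_const c θ)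

theorem HasFDerivAt.div_const {f : E → ℝ} {f' : E →L[ℝ] ℝ} {θ : E} (hf : HasFDerivAt f f' θ)
    (r : ℝ) : HasFDerivAt (fun x => f x / r) (r⁻¹ • f') θ := by
  simpa only [div_eq_inv_mul] using hf.const_mul r⁻¹

theorem HasFDerivAt.log_div_const_sq {f : E → ℝ} {f' : E →L[ℝ] ℝ} {θ : E} {r : ℝ}
    (hf : HasFDerivAt f f' θ) (hfθ : f θ ≠ 0) (hr : r ≠ 0) :
    HasFDerivAt (fun x => Real.log (f x / r) ^ 2) ((2 * Real.log (f θ / r) / f θ) • f') θ := by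
  refine (((hf.div_const r).log (div_ne_zero hfθ hr)).pow 2).congr_fderiv ?_
  ext v
  simp only [Nat.add_one_sub_one, pow_one, nsmul_eq_mul, Nat.cast_ofNat, inv_div,
    smul_apply, smul_eq_mul]
  field_simp

theorem HasFDerivAt.mul_log_div_const {f : E → ℝ} {f' : E →L[ℝ] ℝ} {θ : E} {r : ℝ}
    (hf : HasFDerivAt f f' θ) (hfθ : f θ ≠ 0) (hr : r ≠ 0) :
    HasFDerivAt (fun x => f x * Real.log (f x / r)) ((Real.log (f θ / r) + 1) • f') θ := by
  refine (hf.mul ((hf.div_const r).log (div_ne_zero hfθ hr))).congr_fderiv ?_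
  ext v
  simp only [inv_div, add_apply, smul_apply, smul_eq_mul]
  field_simp
  ring

theorem sum_smul_fderiv_log_div_sq_eq_two_smul_fderiv_sum_mul_log_div
    {m : E → Γ → ℝ} {m' : Γ → E →L[ℝ] ℝ} {r : Γ → ℝ} {θ : E}
    (hm : ∀ τ, HasFDerivAt (fun θ' => m θ' τ) (m' τ) θ) (hm' : ∑ τ, m' τ = 0)
    (hmθ : ∀ τ, m θ τ ≠ 0) (hr : ∀ τ, r τ ≠ 0) :
    ∑ τ, m θ τ • fderiv ℝ (fun θ' => Real.log (m θ' τ / r τ) ^ 2) θ =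
      (2 : ℝ) • fderiv ℝ (fun θ' => ∑ τ, m θ' τ * Real.log (m θ' τ / r τ)) θ := by
  have hKL : HasFDerivAt (fun θ' => ∑ τ, m θ' τ * Real.log (m θ' τ / r τ))
      (∑ τ, (Real.log (m θ τ / r τ) + 1) • m' τ) θ :=
    HasFDerivAt.fun_sum fun τ _ => (hm τ).mul_log_div_const (hmθ τ) (hr τ)
  rw [hKL.fderiv]
  simp only [add_smul, one_smul, Finset.sum_add_distrib, hm', add_zero, Finset.smul_sum,
    smul_smul]
  refine Finset.sum_congr rfl fun τ _ => ?_
  rw [((hm τ).log_div_const_sq (hmθ τ) (hr τ)).fderiv, smul_smul]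
  congr 1
  field_simp [hmθ τ]

end Calculus

theorem mixture_div_target_eq {Z Zθ a P p R : ℝ} (hZ : Z ≠ 0) (hZZθ : Z + Zθ ≠ 0) (hP : P ≠ 0) :
    ((1 - Zθ / (Z + Zθ)) * (a * P / Z) + Zθ / (Z + Zθ) * p) / (R * P / (Z + Zθ)) =
      (Zθ * p / P + a) / R := by
  field_simp
  ring

theorem boosted_gfn_is_boosting_vi_general
    {E : Type*} [NormedAddCommGroup E] [NormedSpace ℝ E]
    {Γ X : Type*} [Fintype Γ] [Fintype X]
    (t : Γ → X) (PB : X → Γ → ℝ) (R : X → ℝ)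
    (Rold : X → ℝ) (Zθ : ℝ) (pF : E → Γ → ℝ)
    (hPBpos : ∀ τ, 0 < PB (t τ) τ)
    (hR : ∀ x, 0 < R x)
    (hRold : ∀ x, 0 ≤ Rold x)
    (hZold : 0 < ∑ x, Rold x)
    (hZθ : 0 < Zθ)
    (hpFpos : ∀ θ τ, 0 < pF θ τ)
    (hpFsum : ∀ θ, ∑ τ, pF θ τ = 1)
    (hpFdiff : ∀ τ, Differentiable ℝ (fun θ => pF θ τ)) :
    ∀ θ : E,
      (∑ τ,
        ((1 - Zθ / ((∑ x, Rold x) + Zθ)) *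
            (Rold (t τ) * PB (t τ) τ / (∑ x, Rold x)) +
          (Zθ / ((∑ x, Rold x) + Zθ)) * pF θ τ) •
          fderiv ℝ (fun θ' =>
            (Real.log (Zθ * pF θ' τ / PB (t τ) τ + Rold (t τ)) -
              Real.log (R (t τ))) ^ 2) θ) =
      (2 : ℝ) •
        fderiv ℝ (fun θ' => ∑ τ,
          ((1 - Zθ / ((∑ x, Rold x) + Zθ)) *
              (Rold (t τ) * PB (t τ) τ / (∑ x, Rold x)) +
            (Zθ / ((∑ x, Rold x) + Zθ)) * pF θ' τ) *
            Real.log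
              ((((1 - Zθ / ((∑ x, Rold x) + Zθ)) *
                  (Rold (t τ) * PB (t τ) τ / (∑ x, Rold x)) +
                (Zθ / ((∑ x, Rold x) + Zθ)) * pF θ' τ)) /
                (R (t τ) * PB (t τ) τ / ((∑ x, Rold x) + Zθ)))) θ := by
  intro θ
  have hZZθ : 0 < (∑ x, Rold x) + Zθ := by positivity
  have hg : ∀ θ' τ, Zθ * pF θ' τ / PB (t τ) τ + Rold (t τ) ≠ 0 := fun θ' τ =>
    (add_pos_of_pos_of_nonneg (div_pos (mul_pos hZθ (hpFpos θ' τ)) (hPBpos τ)) (hRold _)).ne'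
  have hratio := fun θ' τ => mixture_div_target_eq (R := R (t τ)) (a := Rold (t τ))
    (p := pF θ' τ) hZold.ne' hZZθ.ne' (hPBpos τ).ne'
  have hloss : ∀ θ' τ, (Real.log (Zθ * pF θ' τ / PB (t τ) τ + Rold (t τ)) -
      Real.log (R (t τ))) ^ 2 = Real.log (((1 - Zθ / ((∑ x, Rold x) + Zθ)) *
        (Rold (t τ) * PB (t τ) τ / (∑ x, Rold x)) + Zθ / ((∑ x, Rold x) + Zθ) * pF θ' τ) /
        (R (t τ) * PB (t τ) τ / ((∑ x, Rold x) + Zθ))) ^ 2 := fun θ' τ => by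
    rw [hratio, Real.log_div (hg θ' τ) (hR _).ne']
  have hD := fun τ => (hpFdiff τ θ).hasFDerivAt
  simp only [hloss]
  refine sum_smul_fderiv_log_div_sq_eq_two_smul_fderiv_sum_mul_log_div
    (fun τ => ((hD τ).const_mul _).const_add _) ?_ (fun τ => ?_) (fun τ => ?_)
  · rw [← Finset.smul_sum, sum_eq_zero_of_hasFDerivAt_of_sum_eq_const hD hpFsum, smul_zero]
  · have hquot := div_ne_zero (hg θ τ) (hR (t τ)).ne'
    rw [← hratio] at hquot
    exact (div_ne_zero_iff.mp hquot).1
  · exact (div_pos (mul_pos (hR _) (hPBpos τ)) hZZθ).ne'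

/-- Boosted GFlowNet training performs boosting variational inference:
with `β = Z_θ/(Z_old + Z_θ)`, `p_old(τ) = R̂_old(t τ)·P_B(τ|t τ)/Z_old`,
`p_tgt(τ) = R(t τ)·P_B(τ|t τ)/(Z_old + Z_θ)`,
`p_M(θ,τ) = (1−β)·p_old(τ) + β·p_F(θ,τ)`, and boosted loss
`L_boost(θ,τ) = (log(Z_θ·p_F(θ,τ)/P_B(τ|t τ) + R̂_old(t τ)) − log R(t τ))²`,
the `p_M`-expected gradient of `L_boost` equals twice the gradient of the
(generalized) KL divergence of `p_M(θ,·)` from `p_tgt`. -/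
theorem boosted_gfn_is_boosting_vi
    {E : Type*} [NormedAddCommGroup E] [NormedSpace ℝ E] [FiniteDimensional ℝ E]
    {Γ X : Type*} [Fintype Γ] [Fintype X] [DecidableEq X]
    (t : Γ → X) (PB : X → Γ → ℝ) (R : X → ℝ)
    (Rold : X → ℝ) (Zθ : ℝ) (pF : E → Γ → ℝ)
    (hPB0 : ∀ x τ, 0 ≤ PB x τ)
    (hPBsupp : ∀ x τ, t τ ≠ x → PB x τ = 0)
    (hPB1 : ∀ x, ∑ τ ∈ Finset.univ.filter (fun τ => t τ = x), PB x τ = 1)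
    (hPBpos : ∀ τ, 0 < PB (t τ) τ)
    (hR : ∀ x, 0 < R x)
    (hRold : ∀ x, 0 ≤ Rold x)
    (hZold : 0 < ∑ x, Rold x)
    (hZθ : 0 < Zθ)
    (hpFpos : ∀ θ τ, 0 < pF θ τ)
    (hpFsum : ∀ θ, ∑ τ, pF θ τ = 1)
    (hpFdiff : ∀ τ, Differentiable ℝ (fun θ => pF θ τ)) :
    ∀ θ : E,
      (∑ τ,
        ((1 - Zθ / ((∑ x, Rold x) + Zθ)) *
            (Rold (t τ) * PB (t τ) τ / (∑ x, Rold x)) +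
          (Zθ / ((∑ x, Rold x) + Zθ)) * pF θ τ) •
          fderiv ℝ (fun θ' =>
            (Real.log (Zθ * pF θ' τ / PB (t τ) τ + Rold (t τ)) -
              Real.log (R (t τ))) ^ 2) θ) =
      (2 : ℝ) •
        fderiv ℝ (fun θ' => ∑ τ,
          ((1 - Zθ / ((∑ x, Rold x) + Zθ)) *
              (Rold (t τ) * PB (t τ) τ / (∑ x, Rold x)) +
            (Zθ / ((∑ x, Rold x) + Zθ)) * pF θ' τ) *
            Real.log
              ((((1 - Zθ / ((∑ x, Rold x) + Zθ)) *
                  (Rold (t τ) * PB (t τ) τ / (∑ x, Rold x)) +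
                (Zθ / ((∑ x, Rold x) + Zθ)) * pF θ' τ)) /
                (R (t τ) * PB (t τ) τ / ((∑ x, Rold x) + Zθ)))) θ :=
  boosted_gfn_is_boosting_vi_general t PB R Rold Zθ pF hPBpos hR hRold hZold hZθ hpFpos hpFsum
    hpFdiff
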